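/- For each 0 < α ≤ 1 and n ∈ ℕ there exists q = q(n,α) ∈ ℕ such that among any q points in ℝⁿ there are three points x₀, x₁, x₂ and a direction θ ∈ S^{n-1} with x₁ ∈ X⁺(x₀,θ,α) and x₂ ∈ X⁺(x₀,−θ,α). -/

import Mathlib

/-!
Finitely many cones of aperture `α` around unit vectors `θ ∈ T` cover `ℝⁿ \ {0}` (compactness of
the sphere). Order the points and colour each pair `xᵢ, xⱼ` (`i < j`) by a `θ ∈ T` whose cone at `xᵢ`
contains `xⱼ`. Labelling each point by the set of colours of the pairs ending at it, two points with
the same label would force a monochromatic path `xₕ → xᵢ → xⱼ`, and then `xᵢ` is the required apex.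
Hence with more than `2 ^ |T|` points a good triple exists.
-/

open MeasureTheory Metric Filter Set
open scoped RealInnerProductSpace

/-- The one-sided open cone `X⁺(x,θ,α) = {y : (y-x)·θ > (1-α²)^{1/2}|y-x|}`. -/
def oneSidedCone {n : ℕ} (x θ : EuclideanSpace ℝ (Fin n)) (α : ℝ) :
    Set (EuclideanSpace ℝ (Fin n)) :=
  {y | Real.sqrt (1 - α ^ 2) * ‖y - x‖ < ⟪y - x, θ⟫}

theorem exists_monochromatic_path_of_two_pow_card_lt {ι C : Type*} [LinearOrder ι] [Fintype ι]
    [Fintype C] (colour : ι → ι → C → Prop) (hcolour : ∀ i j, i < j → ∃ c, colour i j c)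
    (hcard : 2 ^ Fintype.card C < Fintype.card ι) :
    ∃ h i j c, h < i ∧ i < j ∧ colour h i c ∧ colour i j c := by
  classical
  by_contra! hpath
  let incoming (j : ι) : Finset C := {c | ∃ i < j, colour i j c}
  have hinj : Function.Injective incoming := .of_lt_imp_ne fun i j hij heq => by
    obtain ⟨c, hc⟩ := hcolour i j hij
    have hcj : c ∈ incoming j := Finset.mem_filter.mpr ⟨Finset.mem_univ c, i, hij, hc⟩
    obtain ⟨-, h, hhi, hh⟩ := Finset.mem_filter.mp (heq ▸ hcj)
    exact hpath h i j c hhi hij hh hc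
  have := Fintype.card_le_of_injective incoming hinj
  rw [Fintype.card_finset] at this
  omega

open scoped Topology in
theorem exists_finset_norm_eq_one_forall_lt_inner {E : Type*} [NormedAddCommGroup E]
    [InnerProductSpace ℝ E] [ProperSpace E] {c : ℝ} (hc : c < 1) :
    ∃ T : Finset E, (∀ θ ∈ T, ‖θ‖ = 1) ∧ ∀ v : E, v ≠ 0 → ∃ θ ∈ T, c * ‖v‖ < ⟪v, θ⟫ := by
  have hnhds : ∀ θ ∈ sphere (0 : E) 1, {u : E | c < ⟪u, θ⟫} ∈ 𝓝 θ := fun θ hθ => by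
    refine (isOpen_lt continuous_const (by fun_prop)).mem_nhds ?_
    rw [mem_ofPred_eq, real_inner_self_eq_norm_sq, mem_sphere_zero_iff_norm.mp hθ]
    simpa using hc
  obtain ⟨T, hTsphere, hTcover⟩ := (isCompact_sphere (0 : E) 1).elim_nhds_subcover _ hnhds
  refine ⟨T, fun θ hθ => mem_sphere_zero_iff_norm.mp (hTsphere θ hθ), fun v hv => ?_⟩
  have hpos : 0 < ‖v‖ := norm_pos_iff.mpr hv
  have hunit : ‖v‖⁻¹ • v ∈ sphere (0 : E) 1 := by
    rw [mem_sphere_zero_iff_norm, norm_smul, norm_inv, norm_norm, inv_mul_cancel₀ hpos.ne']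
  obtain ⟨θ, hθT, hθ⟩ := mem_iUnion₂.mp (hTcover hunit)
  refine ⟨θ, hθT, ?_⟩
  rw [mem_ofPred_eq, real_inner_smul_left, inv_mul_eq_div, lt_div_iff₀ hpos] at hθ
  exact hθ

theorem mem_oneSidedCone_neg_iff {n : ℕ} {x y θ : EuclideanSpace ℝ (Fin n)} {α : ℝ} :
    y ∈ oneSidedCone x (-θ) α ↔ x ∈ oneSidedCone y θ α := by
  rw [oneSidedCone, oneSidedCone, mem_ofPred_eq, mem_ofPred_eq, inner_neg_right, ← inner_neg_left,
    neg_sub, norm_sub_rev]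

theorem exists_finset_forall_mem_oneSidedCone (n : ℕ) {α : ℝ} (hα : α ≠ 0) :
    ∃ T : Finset (EuclideanSpace ℝ (Fin n)), (∀ θ ∈ T, ‖θ‖ = 1) ∧
      ∀ x y, y ≠ x → ∃ θ ∈ T, y ∈ oneSidedCone x θ α := by
  have hc : Real.sqrt (1 - α ^ 2) < 1 :=
    (Real.sqrt_lt' one_pos).mpr (by simpa using sq_pos_iff.mpr hα)
  obtain ⟨T, hTnorm, hTcover⟩ := exists_finset_norm_eq_one_forall_lt_inner
    (E := EuclideanSpace ℝ (Fin n)) hc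
  exact ⟨T, hTnorm, fun x y hxy => hTcover (y - x) (sub_ne_zero.mpr hxy)⟩

theorem stmt5_general (n : ℕ) (α : ℝ) (hα0 : 0 < α) :
    ∃ q : ℕ, ∀ S : Finset (EuclideanSpace ℝ (Fin n)), S.card = q →
      ∃ x₀ ∈ S, ∃ x₁ ∈ S, ∃ x₂ ∈ S, ∃ θ : EuclideanSpace ℝ (Fin n), ‖θ‖ = 1 ∧
        x₁ ∈ oneSidedCone x₀ θ α ∧ x₂ ∈ oneSidedCone x₀ (-θ) α := by
  obtain ⟨T, hTnorm, hTcover⟩ := exists_finset_forall_mem_oneSidedCone n hα0.ne'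
  refine ⟨2 ^ T.card + 1, fun S hS => ?_⟩
  let x (i : Fin S.card) : EuclideanSpace ℝ (Fin n) := S.equivFin.symm i
  have hx : Function.Injective x := Subtype.val_injective.comp S.equivFin.symm.injective
  obtain ⟨h, i, j, ⟨θ, hθT⟩, -, -, hhi, hij⟩ :=
    exists_monochromatic_path_of_two_pow_card_lt (fun i j (θ : T) => x j ∈ oneSidedCone (x i) θ α)
      (fun i j hij =>
        let ⟨θ, hθT, hθ⟩ := hTcover (x i) (x j) (hx.ne hij.ne'); ⟨⟨θ, hθT⟩, hθ⟩)
      (by simp [hS])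
  exact ⟨x i, (S.equivFin.symm i).2, x j, (S.equivFin.symm j).2, x h, (S.equivFin.symm h).2, θ,
    hTnorm θ hθT, hij, mem_oneSidedCone_neg_iff.mpr hhi⟩

/-- Erdős–Füredi lemma. -/
theorem stmt5 (n : ℕ) (α : ℝ) (hα0 : 0 < α) (hα1 : α ≤ 1) :
    ∃ q : ℕ, ∀ S : Finset (EuclideanSpace ℝ (Fin n)), S.card = q →
      ∃ x₀ ∈ S, ∃ x₁ ∈ S, ∃ x₂ ∈ S, ∃ θ : EuclideanSpace ℝ (Fin n), ‖θ‖ = 1 ∧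
        x₁ ∈ oneSidedCone x₀ θ α ∧ x₂ ∈ oneSidedCone x₀ (-θ) α :=
  stmt5_general n α hα0
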